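/- arXiv:2205.13910 — 2 statements merged into one kernel-verified Lean document; each statement's English description precedes it below -/
import Mathlib

section
/- Let q ∈ [1, ∞) and let U be distributed uniformly on the open ℓ1-ball B_1^d = {x ∈ ℝ^d : ||x||_1 < 1}. Then E[||U||_q] ≤ q·d^{1/q}/(d+1). -/
/-!
Jensen's inequality gives `E ‖U‖_q ≤ (E ∑ |U i| ^ q) ^ (1/q)`, and the `q`-th moment is
computed from the Laplace representation of the ball: if `N` and `g` are positively homogeneous of
degrees `1` and `s`, then writing `e^{-N x} = ∫_{N x}^∞ e^{-r} dr` and using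
`∫_{N < r} g = r ^ (d + s) ∫_{N < 1} g` yields `∫ e^{-N} g = Γ(d + s + 1) ∫_{N < 1} g`. For
`N = ‖·‖₁` the left side factorises over the coordinates, so
`E ∑ |U i| ^ q = d Γ(q + 1) Γ(d + 1) / Γ(d + q + 1)`. Log-convexity of `Γ` gives
`Γ(q + 1) ≤ q ^ q` and `(d + 1) ^ q Γ(d + 1) ≤ Γ(d + q + 1)`, which bounds this by
`d (q / (d + 1)) ^ q`.
-/

open MeasureTheory ProbabilityTheory

/-- The uniform distribution on the open ℓ¹-ball `B₁ᵈ = {x : ‖x‖₁ < 1}` in `ℝᵈ`. -/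
noncomputable def uniformBall (d : ℕ) : Measure (Fin d → ℝ) :=
  ProbabilityTheory.cond volume {x | ∑ i, |x i| < 1}

open Real Set Module
open scoped ENNReal

theorem integrable_of_integral_ne_zero {α E : Type*} [MeasurableSpace α]
    [NormedAddCommGroup E] [NormedSpace ℝ E] {μ : Measure α} {f : α → E}
    (h : ∫ x, f x ∂μ ≠ 0) : Integrable f μ := by
  by_contra hf
  exact h (integral_undef hf)

theorem lintegral_rpow_le_rpow_lintegral {α : Type*} [MeasurableSpace α] {μ : Measure α}
    [IsProbabilityMeasure μ] {f : α → ℝ≥0∞} (hf : AEMeasurable f μ) {p : ℝ}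
    (hp0 : 0 < p) (hp1 : p ≤ 1) : ∫⁻ x, f x ^ p ∂μ ≤ (∫⁻ x, f x ∂μ) ^ p := by
  have h := eLpNorm'_le_eLpNorm'_of_exponent_le one_pos (one_le_one_div hp0 hp1) μ
    (hf.pow_const p).aestronglyMeasurable
  simp only [eLpNorm', enorm_eq_self, div_one, one_div_one_div] at h
  simpa [← ENNReal.rpow_mul, hp0.ne'] using h

namespace Real

theorem log_Gamma_add_one_sub_log_Gamma {x : ℝ} (hx : 0 < x) :
    log (Gamma (x + 1)) - log (Gamma x) = log x := by
  rw [Gamma_add_one hx.ne', log_mul hx.ne' (Gamma_pos_of_pos hx).ne', add_sub_cancel_right]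

theorem rpow_mul_Gamma_le_Gamma_add {x q : ℝ} (hx : 0 < x) (hq : 1 ≤ q) :
    x ^ q * Gamma x ≤ Gamma (x + q) := by
  have hslope := convexOn_log_Gamma.secant_mono (a := x) (x := x + 1) (y := x + q)
    hx (by simp; linarith) (by simp; linarith) (by simp) (by simp; linarith) (by linarith)
  simp only [Function.comp, add_sub_cancel_left, div_one, log_Gamma_add_one_sub_log_Gamma hx,
    le_div_iff₀ (by linarith : 0 < q)] at hslope
  rw [← log_le_log_iff (by positivity) (Gamma_pos_of_pos (by linarith)),
    log_mul (by positivity) (Gamma_pos_of_pos hx).ne', log_rpow hx]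
  linarith

theorem Gamma_add_le_rpow_mul_Gamma {x q : ℝ} (hx : 0 < x) (hq : 1 ≤ q) :
    Gamma (x + q) ≤ (x + q - 1) ^ q * Gamma x := by
  have hslope := convexOn_log_Gamma.secant_mono (a := x + q) (x := x) (y := x + q - 1)
    (by simp; linarith) hx (by simp; linarith) (by simp; linarith) (by simp) (by linarith)
  have hstep := log_Gamma_add_one_sub_log_Gamma (x := x + q - 1) (by linarith)
  rw [sub_add_cancel] at hstep
  simp only [Function.comp, show x - (x + q) = -q by ring, show x + q - 1 - (x + q) = -1 by ring,
    div_neg, div_one] at hslope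
  rw [neg_le_neg_iff, le_div_iff₀ (by linarith : 0 < q), ← neg_sub, hstep] at hslope
  have hbase : 0 < x + q - 1 := by linarith
  rw [← log_le_log_iff (Gamma_pos_of_pos (by linarith)) (by positivity),
    log_mul (rpow_pos_of_pos hbase q).ne' (Gamma_pos_of_pos hx).ne', log_rpow hbase]
  linarith

theorem Gamma_add_one_le_rpow_self {q : ℝ} (hq : 1 ≤ q) : Gamma (q + 1) ≤ q ^ q := by
  simpa [add_comm] using Gamma_add_le_rpow_mul_Gamma one_pos hq

theorem Gamma_add_one_mul_Gamma_div_Gamma_add_le {x q : ℝ} (hx : 0 < x) (hq : 1 ≤ q) :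
    Gamma (q + 1) * Gamma x / Gamma (x + q) ≤ (q / x) ^ q := by
  have hGx := Gamma_pos_of_pos hx
  rw [div_le_iff₀ (Gamma_pos_of_pos (by linarith)), div_rpow (by linarith) hx.le]
  calc Gamma (q + 1) * Gamma x ≤ q ^ q * Gamma x := by gcongr; exact Gamma_add_one_le_rpow_self hq
    _ = q ^ q / x ^ q * (x ^ q * Gamma x) := by field_simp
    _ ≤ q ^ q / x ^ q * Gamma (x + q) := by gcongr; exact rpow_mul_Gamma_le_Gamma_add hx hq

end Real

theorem lintegral_Ioi_exp_neg (a : ℝ) :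
    ∫⁻ r in Ioi a, ENNReal.ofReal (exp (-r)) = ENNReal.ofReal (exp (-a)) := by
  have hint : IntegrableOn (fun r => exp (-r)) (Ioi a) := by
    simpa using exp_neg_integrableOn_Ioi a one_pos
  rw [← ofReal_integral_eq_lintegral_ofReal hint (ae_of_all _ fun r => (exp_pos _).le),
    integral_exp_neg_Ioi]

theorem lintegral_Ioi_exp_neg_mul_rpow_eq_Gamma {s : ℝ} (hs : 0 < s) :
    ∫⁻ r in Ioi 0, ENNReal.ofReal (exp (-r) * r ^ (s - 1)) = ENNReal.ofReal (Gamma s) := by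
  rw [← ofReal_integral_eq_lintegral_ofReal (GammaIntegral_convergent hs)
    ((ae_restrict_iff' measurableSet_Ioi).2 <| ae_of_all _ fun r (hr : 0 < r) => by positivity),
    Gamma_eq_integral hs]

section Homogeneous

variable {E : Type*} [NormedAddCommGroup E] [NormedSpace ℝ E] [FiniteDimensional ℝ E]
  [MeasurableSpace E] [BorelSpace E] (μ : Measure E) [μ.IsAddHaarMeasure]
  {N : E → ℝ} {g : E → ℝ≥0∞} {s : ℝ}

theorem setLIntegral_lt_eq_rpow_mul (hN : ∀ r > 0, ∀ x, N (r • x) = r * N x)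
    (hg : ∀ r > 0, ∀ x, g (r • x) = ENNReal.ofReal (r ^ s) * g x) {r : ℝ} (hr : 0 < r) :
    ∫⁻ x in {x | N x < r}, g x ∂μ
      = ENNReal.ofReal (r ^ (finrank ℝ E + s)) * ∫⁻ x in {x | N x < 1}, g x ∂μ := by
  set e : E ≃ᵐ E := MeasurableEquiv.smul₀ r hr.ne'
  have hμ : μ = ENNReal.ofReal (r ^ finrank ℝ E) • μ.map e := by
    rw [MeasurableEquiv.coe_smul₀, Measure.map_addHaar_smul μ hr.ne', smul_smul,
      abs_of_pos (by positivity), ← ENNReal.ofReal_mul (by positivity),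
      mul_inv_cancel₀ (by positivity), ENNReal.ofReal_one, one_smul]
  have hpre : e ⁻¹' {x | N x < r} = {x | N x < 1} := by
    ext x
    simp [e, hN r hr, mul_lt_iff_lt_one_right hr]
  conv_lhs => rw [hμ]
  rw [Measure.restrict_smul, lintegral_smul_measure, e.restrict_map, lintegral_map_equiv, hpre]
  simp only [e, MeasurableEquiv.coe_smul₀, hg r hr]
  rw [lintegral_const_mul' _ _ ENNReal.ofReal_ne_top, smul_eq_mul, ← mul_assoc,
    ← ENNReal.ofReal_mul (by positivity), rpow_add hr, rpow_natCast]

theorem lintegral_exp_neg_mul_eq_Gamma_mul_setLIntegral (hN0 : ∀ x, 0 ≤ N x)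
    (hNm : Measurable N) (hgm : Measurable g) (hN : ∀ r > 0, ∀ x, N (r • x) = r * N x)
    (hg : ∀ r > 0, ∀ x, g (r • x) = ENNReal.ofReal (r ^ s) * g x)
    (hs : 0 < finrank ℝ E + s + 1) :
    ∫⁻ x, ENNReal.ofReal (exp (-N x)) * g x ∂μ
      = ENNReal.ofReal (Gamma (finrank ℝ E + s + 1)) * ∫⁻ x in {x | N x < 1}, g x ∂μ := by
  set Φ : E → ℝ → ℝ≥0∞ := fun x r =>
    if N x < r then ENNReal.ofReal (exp (-r)) * g x else 0
  have hΦ : Measurable (Function.uncurry Φ) :=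
    Measurable.ite (measurableSet_lt (hNm.comp measurable_fst) measurable_snd)
      (by fun_prop) measurable_const
  have hfiber : ∀ x, ENNReal.ofReal (exp (-N x)) * g x = ∫⁻ r in Ioi 0, Φ x r := by
    intro x
    have : ∀ r, Φ x r = (Ioi (N x)).indicator (fun r => ENNReal.ofReal (exp (-r)) * g x) r :=
      fun r => by simp [Φ, indicator_apply]
    rw [lintegral_congr this, lintegral_indicator measurableSet_Ioi,
      Measure.restrict_restrict measurableSet_Ioi, Ioi_inter_Ioi, max_eq_left (hN0 x),
      lintegral_mul_const _ (by fun_prop), lintegral_Ioi_exp_neg]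
  have hslice : ∀ r ∈ Ioi (0 : ℝ), ∫⁻ x, Φ x r ∂μ
      = ENNReal.ofReal (exp (-r) * r ^ (finrank ℝ E + s + 1 - 1)) *
          ∫⁻ x in {x | N x < 1}, g x ∂μ := by
    intro r hr
    have : ∀ x, Φ x r = ENNReal.ofReal (exp (-r)) * {x | N x < r}.indicator g x :=
      fun x => by by_cases h : N x < r <;> simp [Φ, h]
    rw [lintegral_congr this, lintegral_const_mul _ (hgm.indicator (measurableSet_lt hNm
      measurable_const)), lintegral_indicator (measurableSet_lt hNm measurable_const),
      setLIntegral_lt_eq_rpow_mul μ hN hg hr, ← mul_assoc, ← ENNReal.ofReal_mul (exp_pos _).le,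
      add_sub_cancel_right]
  calc ∫⁻ x, ENNReal.ofReal (exp (-N x)) * g x ∂μ
    _ = ∫⁻ x, (∫⁻ r in Ioi 0, Φ x r) ∂μ := lintegral_congr hfiber
    _ = ∫⁻ r in Ioi 0, ∫⁻ x, Φ x r ∂μ := lintegral_lintegral_swap hΦ.aemeasurable
    _ = ∫⁻ r in Ioi 0, ENNReal.ofReal (exp (-r) * r ^ (finrank ℝ E + s + 1 - 1)) *
          ∫⁻ x in {x | N x < 1}, g x ∂μ := setLIntegral_congr_fun measurableSet_Ioi hslice
    _ = _ := by rw [lintegral_mul_const _ (by fun_prop), lintegral_Ioi_exp_neg_mul_rpow_eq_Gamma hs]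

end Homogeneous

theorem integral_exp_neg_abs_mul_abs_rpow {p : ℝ} (hp : -1 < p) :
    ∫ t : ℝ, exp (-|t|) * |t| ^ p = 2 * Gamma (p + 1) := by
  rw [integral_comp_abs (f := fun t => exp (-t) * t ^ p), Gamma_eq_integral (by linarith),
    add_sub_cancel_right]

section L1

variable {ι : Type*} [Fintype ι]

theorem integral_exp_neg_sum_abs_mul_prod_abs_rpow {p : ι → ℝ} (hp : ∀ i, -1 < p i) :
    ∫ x : ι → ℝ, exp (-∑ i, |x i|) * ∏ i, |x i| ^ p i = ∏ i, 2 * Gamma (p i + 1) := by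
  have hprod : ∀ x : ι → ℝ,
      exp (-∑ i, |x i|) * ∏ i, |x i| ^ p i = ∏ i, exp (-|x i|) * |x i| ^ p i := fun x => by
    rw [Finset.prod_mul_distrib, ← Finset.sum_neg_distrib, exp_sum]
  simp only [hprod]
  rw [integral_fintype_prod_volume_eq_prod (fun i t => exp (-|t|) * |t| ^ p i)]
  exact Finset.prod_congr rfl fun i _ => integral_exp_neg_abs_mul_abs_rpow (hp i)

theorem integral_exp_neg_sum_abs_mul_abs_rpow (i : ι) {q : ℝ} (hq : -1 < q) :
    ∫ x : ι → ℝ, exp (-∑ j, |x j|) * |x i| ^ q = 2 ^ Fintype.card ι * Gamma (q + 1) := by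
  classical
  have hsingle : ∀ f : ι → ℝ → ℝ, (∀ j, f j 0 = 1) →
      ∏ j, f j ((Pi.single i q : ι → ℝ) j) = f i q := fun f hf =>
    (Finset.prod_eq_single i (fun j _ hj => by simp [hj, hf]) (by simp)).trans (by simp)
  have h := integral_exp_neg_sum_abs_mul_prod_abs_rpow (p := Pi.single i q)
    (fun j => by by_cases h : j = i <;> simp [h, hq])
  simp only [Finset.prod_mul_distrib, Finset.prod_const, Finset.card_univ] at h
  have hpow : ∀ x : ι → ℝ, ∏ j, |x j| ^ (Pi.single i q : ι → ℝ) j = |x i| ^ q :=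
    fun x => hsingle (fun j t => |x j| ^ t) fun _ => rpow_zero _
  simpa only [hpow, hsingle (fun _ t => Gamma (t + 1)) (by simp)] using h

theorem lintegral_exp_neg_sum_abs_mul_sum_abs_rpow {q : ℝ} (hq : -1 < q) :
    ∫⁻ x : ι → ℝ, ENNReal.ofReal (exp (-∑ i, |x i|)) * ENNReal.ofReal (∑ i, |x i| ^ q)
      = ENNReal.ofReal (Fintype.card ι * 2 ^ Fintype.card ι * Gamma (q + 1)) := by
  have hGamma : 0 < Gamma (q + 1) := Gamma_pos_of_pos (by linarith)
  have hterm : ∀ i, ∫⁻ x : ι → ℝ, ENNReal.ofReal (exp (-∑ j, |x j|) * |x i| ^ q)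
      = ENNReal.ofReal (2 ^ Fintype.card ι * Gamma (q + 1)) := fun i => by
    rw [← ofReal_integral_eq_lintegral_ofReal (integrable_of_integral_ne_zero
      (by rw [integral_exp_neg_sum_abs_mul_abs_rpow i hq]; positivity))
      (ae_of_all _ fun _ => by positivity), integral_exp_neg_sum_abs_mul_abs_rpow i hq]
  simp_rw [← ENNReal.ofReal_mul (exp_pos _).le, Finset.mul_sum]
  rw [lintegral_congr fun x => ENNReal.ofReal_sum_of_nonneg fun i _ => by positivity,
    lintegral_finsetSum _ fun i _ => by fun_prop, Finset.sum_congr rfl fun i _ => hterm i, Finset.sum_const, Finset.card_univ, nsmul_eq_mul,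
    mul_assoc, ENNReal.ofReal_mul (Nat.cast_nonneg _), ENNReal.ofReal_natCast]

end L1

theorem volume_sum_abs_lt_one (d : ℕ) :
    volume {x : Fin d → ℝ | ∑ i, |x i| < 1} = ENNReal.ofReal (2 ^ d / Gamma (d + 1)) := by
  simpa [one_add_one_eq_two] using volume_sum_rpow_lt_one (Fin d) le_rfl

instance isProbabilityMeasure_uniformBall (d : ℕ) : IsProbabilityMeasure (uniformBall d) :=
  cond_isProbabilityMeasure_of_finite
    (by rw [volume_sum_abs_lt_one]; exact (ENNReal.ofReal_pos.2 (by positivity)).ne')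
    (by rw [volume_sum_abs_lt_one]; exact ENNReal.ofReal_ne_top)

theorem lintegral_sum_abs_rpow_uniformBall (d : ℕ) {q : ℝ} (hq : -1 < q) :
    ∫⁻ x, ENNReal.ofReal (∑ i, |x i| ^ q) ∂uniformBall d
      = ENNReal.ofReal (d * Gamma (q + 1) * Gamma (d + 1) / Gamma (d + q + 1)) := by
  have hdq : 0 < (d : ℝ) + q + 1 := by linarith [(Nat.cast_nonneg d : (0 : ℝ) ≤ d)]
  have hlaplace := lintegral_exp_neg_mul_eq_Gamma_mul_setLIntegral volume (s := q)
    (N := fun x : Fin d → ℝ => ∑ i, |x i|) (g := fun x => ENNReal.ofReal (∑ i, |x i| ^ q))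
    (fun x => by positivity) (by fun_prop) (by fun_prop)
    (fun r hr x => by simp [abs_mul, abs_of_pos hr, Finset.mul_sum])
    (fun r hr x => by
      simp [abs_mul, abs_of_pos hr, mul_rpow hr.le (abs_nonneg _), ← Finset.mul_sum,
        ENNReal.ofReal_mul (rpow_nonneg hr.le q)])
    (by rwa [finrank_fin_fun])
  rw [finrank_fin_fun, lintegral_exp_neg_sum_abs_mul_sum_abs_rpow hq, Fintype.card_fin] at hlaplace
  have hGamma := Gamma_pos_of_pos hdq
  have hball : ∫⁻ x in {x : Fin d → ℝ | ∑ i, |x i| < 1}, ENNReal.ofReal (∑ i, |x i| ^ q)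
      = ENNReal.ofReal (d * 2 ^ d * Gamma (q + 1) / Gamma (d + q + 1)) := by
    rw [ENNReal.ofReal_div_of_pos hGamma, hlaplace, mul_comm,
      ENNReal.mul_div_cancel_right (ENNReal.ofReal_pos.2 hGamma).ne' ENNReal.ofReal_ne_top]
  rw [uniformBall, ProbabilityTheory.cond, lintegral_smul_measure, volume_sum_abs_lt_one, hball,
    smul_eq_mul, ← ENNReal.ofReal_inv_of_pos (by positivity),
    ← ENNReal.ofReal_mul (by positivity)]
  congr 1
  field_simp

theorem lq_moment_uniformBall_general (d : ℕ) (q : ℝ) (hq : 1 ≤ q) :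
    ∫ u, (∑ i, |u i| ^ q) ^ (1 / q) ∂uniformBall d ≤ q * (d : ℝ) ^ (1 / q) / ((d : ℝ) + 1) := by
  have hq0 : 0 < q := by linarith
  have hsum : ∀ u : Fin d → ℝ, 0 ≤ ∑ i, |u i| ^ q := fun u => by positivity
  have hmoment : ∫⁻ u, ENNReal.ofReal (∑ i, |u i| ^ q) ∂uniformBall d
      ≤ ENNReal.ofReal (d * (q / (d + 1)) ^ q) := by
    rw [lintegral_sum_abs_rpow_uniformBall d (by linarith), mul_assoc, mul_div_assoc,
      add_right_comm]
    exact ENNReal.ofReal_le_ofReal <| mul_le_mul_of_nonneg_left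
      (Gamma_add_one_mul_Gamma_div_Gamma_add_le (by positivity) hq) d.cast_nonneg
  have hjensen := lintegral_rpow_le_rpow_lintegral (μ := uniformBall d)
    (Measurable.aemeasurable (f := fun u => ENNReal.ofReal (∑ i, |u i| ^ q)) (by fun_prop))
    (one_div_pos.2 hq0) ((div_le_one hq0).2 hq)
  rw [integral_eq_lintegral_of_nonneg_ae (ae_of_all _ fun u => by positivity)
    (Measurable.aestronglyMeasurable (by fun_prop))]
  simp_rw [← ENNReal.ofReal_rpow_of_nonneg (hsum _) (one_div_nonneg.2 hq0.le)]
  refine ENNReal.toReal_le_of_le_ofReal (by positivity) ?_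
  calc _ ≤ _ := hjensen
    _ ≤ ENNReal.ofReal (d * (q / (d + 1)) ^ q) ^ (1 / q) :=
        ENNReal.rpow_le_rpow hmoment (by positivity)
    _ = ENNReal.ofReal (q * d ^ (1 / q) / (d + 1)) := by
        rw [ENNReal.ofReal_rpow_of_nonneg (by positivity) (by positivity),
          mul_rpow (by positivity) (by positivity), ← rpow_mul (by positivity),
          mul_one_div_cancel hq0.ne', rpow_one]
        ring_nf

/-- If `U` is uniform on the open ℓ¹-ball in `ℝᵈ` and `q ∈ [1, ∞)`, then
`E[‖U‖_q] ≤ q d^{1/q} / (d+1)`. -/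
theorem lq_moment_uniformBall (d : ℕ) (hd : 0 < d) (q : ℝ) (hq : 1 ≤ q) :
    ∫ u, (∑ i, |u i| ^ q) ^ (1 / q) ∂uniformBall d ≤ q * (d : ℝ) ^ (1 / q) / ((d : ℝ) + 1) :=
  lq_moment_uniformBall_general d q hq
end

section
/- (Schechtman–Zinn) Let W_1, ..., W_d be i.i.d. mean-0 scale-1 Laplace random variables and W = (W_1,...,W_d). Then W/||W||_1 is uniformly distributed on the ℓ1-sphere S_1^d, and W/||W||_1 is independent of ||W||_1. -/
/-!
The Laplace vector has density `2⁻ᵈ e^{-‖x‖₁}`, a function `g(‖x‖₁)` of the ℓ¹ norm alone, and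
that is all the argument uses. For a cone `C`, scaling gives
`vol (C ∩ {‖x‖₁ ≤ t}) = tᵈ vol (C ∩ {‖x‖₁ ≤ 1})`, so the image under `‖·‖₁` of `vol` restricted
to `C` is the image of `vol` scaled by the fraction `κ(C)` of the ℓ¹-ball occupied by `C`.
Integrating `g`, `ν (C ∩ {‖x‖₁ ∈ B}) = κ(C) ν {‖x‖₁ ∈ B}`. The sets `C = {x / ‖x‖₁ ∈ A}` are
cones and `κ(C)` is the cone measure of `A`, so the joint law of `(x / ‖x‖₁, ‖x‖₁)` is the product
of the cone measure and the law of `‖x‖₁`.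
-/

open MeasureTheory ProbabilityTheory

noncomputable def laplaceMeasure : Measure ℝ :=
  volume.withDensity (fun w => ENNReal.ofReal ((1 / 2) * Real.exp (-|w|)))

/-- The uniform distribution on the ℓ¹-sphere `S₁ᵈ`: the normalized cone measure, i.e. the
pushforward of the uniform distribution on the ℓ¹-ball under the radial projection
`x ↦ x/‖x‖₁`. -/
noncomputable def sphereConeMeasure (d : ℕ) : Measure (Fin d → ℝ) :=
  Measure.map (fun x => (∑ i, |x i|)⁻¹ • x)
    (ProbabilityTheory.cond volume {x : Fin d → ℝ | ∑ i, |x i| ≤ 1})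

open Set Pointwise
open scoped ENNReal

lemma MeasureTheory.Measure.addHaar_cone_inter_sublevel {E : Type*} [NormedAddCommGroup E]
    [NormedSpace ℝ E] [MeasurableSpace E] [BorelSpace E] [FiniteDimensional ℝ E]
    (μ : Measure E) [μ.IsAddHaarMeasure] {N : E → ℝ}
    (hN : ∀ c : ℝ, 0 < c → ∀ x, N (c • x) = c * N x)
    {C : Set E} (hC : ∀ c : ℝ, 0 < c → ∀ x, c • x ∈ C ↔ x ∈ C) {t : ℝ} (ht : 0 < t) :
    μ (C ∩ N ⁻¹' Iic t) = ENNReal.ofReal (t ^ Module.finrank ℝ E) * μ (C ∩ N ⁻¹' Iic 1) := by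
  have hscale : C ∩ N ⁻¹' Iic t = t • (C ∩ N ⁻¹' Iic 1) := by
    ext x
    simp only [mem_smul_set_iff_inv_smul_mem₀ ht.ne', mem_inter_iff, mem_preimage, mem_Iic,
      hC t⁻¹ (inv_pos.2 ht), hN t⁻¹ (inv_pos.2 ht), inv_mul_le_one₀ ht]
  rw [hscale, Measure.addHaar_smul, abs_of_pos (pow_pos ht _)]

lemma MeasureTheory.Measure.pi_withDensity_ofReal {ι α : Type*} [Fintype ι] [MeasurableSpace α]
    {μ : Measure α} [SigmaFinite μ] {f : α → ℝ} (hf : Integrable f μ) (hf0 : 0 ≤ f) :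
    Measure.pi (fun _ : ι => μ.withDensity fun a => ENNReal.ofReal (f a)) =
      (Measure.pi fun _ : ι => μ).withDensity fun x => ENNReal.ofReal (∏ i, f (x i)) := by
  have := isFiniteMeasure_withDensity_ofReal hf.2
  refine Measure.pi_eq fun s hs => ?_
  rw [withDensity_apply _ (MeasurableSet.univ_pi hs), Measure.restrict_pi_pi,
    ← ofReal_integral_eq_lintegral_ofReal
      (Integrable.fintype_prod (μ := fun i => μ.restrict (s i)) fun _ => hf.integrableOn)
      (ae_of_all _ fun x => Finset.prod_nonneg fun i _ => hf0 _),
    integral_fintype_prod_eq_prod (fun _ => f),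
    ENNReal.ofReal_prod_of_nonneg fun i _ => integral_nonneg fun _ => hf0 _]
  refine Finset.prod_congr rfl fun i _ => ?_
  rw [withDensity_apply _ (hs i),
    ofReal_integral_eq_lintegral_ofReal hf.integrableOn (ae_of_all _ fun _ => hf0 _)]

lemma integral_exp_neg_abs : ∫ x : ℝ, Real.exp (-|x|) = 2 := by
  rw [integral_comp_abs (f := fun x => Real.exp (-x)), integral_exp_neg_Ioi_zero, mul_one]

lemma integrable_laplace_density : Integrable fun x : ℝ => (1 / 2) * Real.exp (-|x|) :=
  (Integrable.of_integral_ne_zero (by rw [integral_exp_neg_abs]; norm_num)).const_mul _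

instance isProbabilityMeasure_laplaceMeasure : IsProbabilityMeasure laplaceMeasure := by
  constructor
  rw [laplaceMeasure, withDensity_apply _ MeasurableSet.univ, Measure.restrict_univ,
    ← ofReal_integral_eq_lintegral_ofReal integrable_laplace_density
      (ae_of_all _ fun _ => by positivity),
    integral_const_mul, integral_exp_neg_abs]
  norm_num

section L1Norm

variable {ι : Type*} [Fintype ι]

def l1Norm (x : ι → ℝ) : ℝ := ∑ i, |x i|

noncomputable def l1Proj (x : ι → ℝ) : ι → ℝ := (l1Norm x)⁻¹ • x

variable (ι) in
noncomputable def uniformOnL1Ball : Measure (ι → ℝ) := volume[|l1Norm ⁻¹' Iic 1]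

lemma l1Norm_nonneg (x : ι → ℝ) : 0 ≤ l1Norm x :=
  Finset.sum_nonneg fun _ _ => abs_nonneg _

lemma l1Norm_eq_zero_iff {x : ι → ℝ} : l1Norm x = 0 ↔ x = 0 := by
  simp [l1Norm, Finset.sum_eq_zero_iff_of_nonneg, funext_iff]

lemma abs_le_l1Norm (x : ι → ℝ) (i : ι) : |x i| ≤ l1Norm x :=
  Finset.single_le_sum (fun j _ => abs_nonneg (x j)) (Finset.mem_univ i)

lemma l1Norm_smul {c : ℝ} (hc : 0 ≤ c) (x : ι → ℝ) : l1Norm (c • x) = c * l1Norm x := by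
  simp only [l1Norm, Pi.smul_apply, smul_eq_mul, abs_mul, abs_of_nonneg hc, Finset.mul_sum]

lemma l1Proj_smul {c : ℝ} (hc : 0 < c) (x : ι → ℝ) : l1Proj (c • x) = l1Proj x := by
  rw [l1Proj, l1Proj, l1Norm_smul hc.le, smul_smul, mul_inv, mul_right_comm,
    inv_mul_cancel₀ hc.ne', one_mul]

@[fun_prop]
lemma continuous_l1Norm : Continuous (l1Norm (ι := ι)) := by
  unfold l1Norm; fun_prop

@[fun_prop]
lemma measurable_l1Norm : Measurable (l1Norm (ι := ι)) := continuous_l1Norm.measurable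

@[fun_prop]
lemma measurable_l1Proj : Measurable (l1Proj (ι := ι)) := by
  unfold l1Proj; fun_prop

lemma volume_l1Norm_le_lt_top (t : ℝ) : volume (l1Norm ⁻¹' Iic t : Set (ι → ℝ)) < ∞ := by
  refine Bornology.IsBounded.measure_lt_top <| (Metric.isBounded_iff_subset_closedBall 0).2
    ⟨t, fun x hx => ?_⟩
  rw [Metric.mem_closedBall, dist_zero_right]
  exact pi_norm_le_iff_of_nonneg ((l1Norm_nonneg x).trans hx) |>.2 fun i =>
    (abs_le_l1Norm x i).trans hx

lemma volume_l1Norm_le_one_pos : 0 < volume (l1Norm ⁻¹' Iic 1 : Set (ι → ℝ)) :=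
  ((isOpen_Iio.preimage continuous_l1Norm).measure_pos volume ⟨0, by simp [l1Norm]⟩).trans_le
    (measure_mono (preimage_mono Iio_subset_Iic_self))

lemma volume_l1Norm_le_of_nonpos [Nonempty ι] {t : ℝ} (ht : t ≤ 0) :
    volume (l1Norm ⁻¹' Iic t : Set (ι → ℝ)) = 0 :=
  measure_mono_null (fun x hx => l1Norm_eq_zero_iff.1 (hx.trans ht |>.antisymm (l1Norm_nonneg x)))
    (measure_singleton 0)

lemma map_l1Norm_restrict_cone [Nonempty ι] {C : Set (ι → ℝ)}
    (hC : ∀ c : ℝ, 0 < c → ∀ x, c • x ∈ C ↔ x ∈ C) :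
    (volume.restrict C).map l1Norm =
      uniformOnL1Ball ι C • (volume : Measure (ι → ℝ)).map l1Norm := by
  have hS : ∀ t : ℝ, MeasurableSet (l1Norm ⁻¹' Iic t : Set (ι → ℝ)) := fun t =>
    measurable_l1Norm measurableSet_Iic
  refine Measure.ext_of_generateFrom_of_iUnion _ (fun n : ℕ => Iic (n : ℝ))
    (borel_eq_generateFrom_Iic ℝ) isPiSystem_Iic
    (iUnion_eq_univ_iff.2 fun x => ⟨⌈x⌉₊, Nat.le_ceil x⟩) (fun n => mem_range_self _)
    (fun n => ?_) ?_
  · rw [Measure.map_apply measurable_l1Norm measurableSet_Iic]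
    exact ((Measure.restrict_apply_le _ _).trans_lt (volume_l1Norm_le_lt_top _)).ne
  rintro _ ⟨t, rfl⟩
  rw [Measure.smul_apply, Measure.map_apply measurable_l1Norm measurableSet_Iic,
    Measure.map_apply measurable_l1Norm measurableSet_Iic, Measure.restrict_apply (hS t),
    uniformOnL1Ball, cond_apply (hS 1), smul_eq_mul]
  rcases le_or_gt t 0 with ht | ht
  · rw [volume_l1Norm_le_of_nonpos ht, mul_zero]
    exact measure_mono_null inter_subset_left (volume_l1Norm_le_of_nonpos ht)
  have hN : ∀ c : ℝ, 0 < c → ∀ x : ι → ℝ, l1Norm (c • x) = c * l1Norm x :=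
    fun c hc => l1Norm_smul hc.le
  have hcone := Measure.addHaar_cone_inter_sublevel volume hN hC ht
  have hball := Measure.addHaar_cone_inter_sublevel volume hN (C := univ) (by simp) ht
  rw [univ_inter, univ_inter] at hball
  rw [inter_comm, hcone, hball, inter_comm,
    show ∀ a b v : ℝ≥0∞, v⁻¹ * b * (a * v) = a * b * (v⁻¹ * v) by intros; ring,
    ENNReal.inv_mul_cancel volume_l1Norm_le_one_pos.ne' (volume_l1Norm_le_lt_top 1).ne, mul_one]

lemma l1Proj_preimage_smul_mem_iff (A : Set (ι → ℝ)) {c : ℝ} (hc : 0 < c) (x : ι → ℝ) :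
    c • x ∈ l1Proj ⁻¹' A ↔ x ∈ l1Proj ⁻¹' A := by
  rw [mem_preimage, mem_preimage, l1Proj_smul hc]

lemma withDensity_l1Norm_cone_inter [Nonempty ι] {g : ℝ → ℝ≥0∞} (hg : Measurable g)
    {C : Set (ι → ℝ)} (hC : ∀ c : ℝ, 0 < c → ∀ x, c • x ∈ C ↔ x ∈ C)
    {B : Set ℝ} (hB : MeasurableSet B) :
    volume.withDensity (fun x : ι → ℝ => g (l1Norm x)) (C ∩ l1Norm ⁻¹' B) =
      uniformOnL1Ball ι C * volume.withDensity (fun x : ι → ℝ => g (l1Norm x)) (l1Norm ⁻¹' B) :=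
  calc volume.withDensity (fun x : ι → ℝ => g (l1Norm x)) (C ∩ l1Norm ⁻¹' B)
      = ∫⁻ x in l1Norm ⁻¹' B, g (l1Norm x) ∂volume.restrict C := by
        rw [withDensity_apply', Measure.restrict_restrict (measurable_l1Norm hB), inter_comm]
    _ = ∫⁻ r in B, g r ∂(volume.restrict C).map l1Norm :=
        (setLIntegral_map hB hg measurable_l1Norm).symm
    _ = uniformOnL1Ball ι C * ∫⁻ r in B, g r ∂volume.map l1Norm := by
        rw [map_l1Norm_restrict_cone hC, Measure.restrict_smul, lintegral_smul_measure,
          smul_eq_mul]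
    _ = _ := by
        rw [setLIntegral_map hB hg measurable_l1Norm, withDensity_apply _ (measurable_l1Norm hB)]

section Radial

variable [Nonempty ι] {ν : Measure (ι → ℝ)} {g : ℝ → ℝ≥0∞}

lemma measure_l1Proj_preimage_inter_of_eq_withDensity (hg : Measurable g)
    (hν : ν = volume.withDensity fun x => g (l1Norm x)) {A : Set (ι → ℝ)} {B : Set ℝ}
    (hB : MeasurableSet B) :
    ν (l1Proj ⁻¹' A ∩ l1Norm ⁻¹' B) = uniformOnL1Ball ι (l1Proj ⁻¹' A) * ν (l1Norm ⁻¹' B) := by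
  rw [hν]
  exact withDensity_l1Norm_cone_inter hg (fun c hc => l1Proj_preimage_smul_mem_iff A hc) hB

lemma measure_l1Proj_preimage_of_eq_withDensity [IsProbabilityMeasure ν] (hg : Measurable g)
    (hν : ν = volume.withDensity fun x => g (l1Norm x)) (A : Set (ι → ℝ)) :
    ν (l1Proj ⁻¹' A) = uniformOnL1Ball ι (l1Proj ⁻¹' A) := by
  simpa using measure_l1Proj_preimage_inter_of_eq_withDensity hg hν (A := A) MeasurableSet.univ

lemma map_l1Proj_of_eq_withDensity [IsProbabilityMeasure ν] (hg : Measurable g)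
    (hν : ν = volume.withDensity fun x => g (l1Norm x)) :
    ν.map l1Proj = (uniformOnL1Ball ι).map l1Proj := by
  ext A hA
  rw [Measure.map_apply measurable_l1Proj hA, Measure.map_apply measurable_l1Proj hA,
    measure_l1Proj_preimage_of_eq_withDensity hg hν]

lemma indepFun_l1Proj_l1Norm_of_eq_withDensity [IsProbabilityMeasure ν] (hg : Measurable g)
    (hν : ν = volume.withDensity fun x => g (l1Norm x)) : IndepFun l1Proj l1Norm ν := by
  refine indepFun_iff_measure_inter_preimage_eq_mul.2 fun A B _ hB => ?_
  rw [measure_l1Proj_preimage_inter_of_eq_withDensity hg hν hB,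
    measure_l1Proj_preimage_of_eq_withDensity hg hν]

end Radial

lemma pi_laplaceMeasure_eq_withDensity_l1Norm :
    Measure.pi (fun _ : ι => laplaceMeasure) = volume.withDensity
      fun x => ENNReal.ofReal ((1 / 2) ^ Fintype.card ι * Real.exp (-l1Norm x)) := by
  rw [laplaceMeasure,
    Measure.pi_withDensity_ofReal integrable_laplace_density fun _ => by positivity, ← volume_pi]
  congr with x
  rw [Finset.prod_mul_distrib, Finset.prod_const, ← Real.exp_sum, l1Norm,
    ← Finset.sum_neg_distrib, Finset.card_univ]

end L1Norm

/-- (Schechtman–Zinn) If `W = (W_1, …, W_d)` is a vector of i.i.d. mean-0 scale-1 Laplace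
random variables, then `W/‖W‖₁` is uniformly distributed on the ℓ¹-sphere (w.r.t. the
normalized cone measure), and `W/‖W‖₁` is independent of `‖W‖₁`. -/
theorem schechtman_zinn (d : ℕ) (hd : 0 < d) :
    Measure.map (fun w : Fin d → ℝ => (∑ i, |w i|)⁻¹ • w)
        (Measure.pi fun _ : Fin d => laplaceMeasure) = sphereConeMeasure d ∧
      IndepFun (fun w : Fin d → ℝ => (∑ i, |w i|)⁻¹ • w) (fun w : Fin d → ℝ => ∑ i, |w i|)
        (Measure.pi fun _ : Fin d => laplaceMeasure) := by
  have : Nonempty (Fin d) := Fin.pos_iff_nonempty.mp hd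
  have hg : Measurable fun r : ℝ =>
      ENNReal.ofReal ((1 / 2) ^ Fintype.card (Fin d) * Real.exp (-r)) := by
    fun_prop
  have hν := pi_laplaceMeasure_eq_withDensity_l1Norm (ι := Fin d)
  exact ⟨map_l1Proj_of_eq_withDensity hg hν, indepFun_l1Proj_l1Norm_of_eq_withDensity hg hν⟩
end
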